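/- Let $\alpha,\beta\in(-1,1)$ with $\alpha+\beta=0$. Then there is a constant $C=C(\alpha,\beta)$ such that for all $a\ge 1$, $\int_{-1}^{1}|a+x|^{\alpha}|a-x|^{\beta}\,dx\le C$. -/
import Mathlib


noncomputable section
open Real Set MeasureTheory

lemma aux_rpow_add_le (x y p : ℝ) (hx : 0 ≤ x) (hy : 0 ≤ y) (hp : 0 ≤ p) (hp1 : p ≤ 1) :
    (x + y) ^ p ≤ x ^ p + y ^ p := by
  have h := NNReal.rpow_add_le_add_rpow x.toNNReal y.toNNReal hp hp1
  have hxy : (x + y).toNNReal = x.toNNReal + y.toNNReal := Real.toNNReal_add hx hy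
  have h' := (NNReal.coe_le_coe).mpr h
  push_cast at h'
  rw [Real.coe_toNNReal _ hx, Real.coe_toNNReal _ hy] at h'
  exact h'

lemma aux_key_pt (α : ℝ) (h0 : 0 ≤ α) (hα1 : α < 1) (a x : ℝ) (ha : 1 ≤ a)
    (hx : x ∈ Ioo (-1 : ℝ) 1) :
    |a + x| ^ α * |a - x| ^ (-α) ≤ 1 + 2 ^ α * (1 - x) ^ (-α) := by
  obtain ⟨hx1, hx2⟩ := hx
  have h1 : (0:ℝ) < 1 - x := by linarith
  have hax : (0:ℝ) < a - x := by linarith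
  have hax' : (0:ℝ) < a + x := by linarith
  rw [abs_of_pos hax', abs_of_pos hax]
  have step1 : (a + x) ^ α ≤ (a - x) ^ α + 2 ^ α := by
    calc (a + x) ^ α ≤ ((a - x) + 2) ^ α :=
          Real.rpow_le_rpow hax'.le (by linarith) h0
      _ ≤ (a - x) ^ α + 2 ^ α := aux_rpow_add_le _ _ _ hax.le (by norm_num) h0 hα1.le
  have step2 : (a - x) ^ (-α) ≤ (1 - x) ^ (-α) :=
    Real.rpow_le_rpow_of_nonpos h1 (by linarith) (neg_nonpos.mpr h0)
  have hnn : 0 ≤ (a - x) ^ (-α) := Real.rpow_nonneg hax.le _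
  calc (a + x) ^ α * (a - x) ^ (-α)
      ≤ ((a - x) ^ α + 2 ^ α) * (a - x) ^ (-α) := mul_le_mul_of_nonneg_right step1 hnn
    _ = (a - x) ^ α * (a - x) ^ (-α) + 2 ^ α * (a - x) ^ (-α) := by ring
    _ = 1 + 2 ^ α * (a - x) ^ (-α) := by
        rw [← Real.rpow_add hax, add_neg_cancel, Real.rpow_zero]
    _ ≤ 1 + 2 ^ α * (1 - x) ^ (-α) := by
        have h2 : (0:ℝ) ≤ 2 ^ α := Real.rpow_nonneg (by norm_num) _
        nlinarith

theorem integral_elliptic_uniform_bound (α β : ℝ) (hα : α ∈ Ioo (-1 : ℝ) 1)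
    (hβ : β ∈ Ioo (-1 : ℝ) 1) (hαβ : α + β = 0) :
    ∃ C : ℝ, ∀ a : ℝ, 1 ≤ a → (∫ x in (-1 : ℝ)..1, |a + x| ^ α * |a - x| ^ β) ≤ C := by
  obtain ⟨hα1, hα2⟩ := hα
  obtain ⟨hβ1, hβ2⟩ := hβ
  have hba : β = -α := by linarith
  set g : ℝ → ℝ := fun x => 1 + 2 ^ α * (1 - x) ^ β + 2 ^ β * (1 + x) ^ α with hg
  have hg1 : IntervalIntegrable (fun x : ℝ => (1 - x) ^ β) volume (-1) 1 := by
    have h := (intervalIntegral.intervalIntegrable_rpow' (a := 0) (b := 2) hβ1).comp_sub_left 1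
    norm_num at h
    exact h.symm
  have hg2 : IntervalIntegrable (fun x : ℝ => (1 + x) ^ α) volume (-1) 1 := by
    have h := (intervalIntegral.intervalIntegrable_rpow' (a := 0) (b := 2) hα1).comp_add_left 1
    norm_num at h
    exact h
  have hgint : IntervalIntegrable g volume (-1) 1 :=
    (intervalIntegrable_const.add (hg1.const_mul _)).add (hg2.const_mul _)
  refine ⟨∫ x in (-1 : ℝ)..1, g x, fun a ha => ?_⟩
  have hpt : ∀ x ∈ Ioo (-1 : ℝ) 1, |a + x| ^ α * |a - x| ^ β ≤ g x := by
    intro x hx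
    obtain ⟨hx1, hx2⟩ := hx
    rcases le_or_gt 0 α with h0 | h0
    · have hk := aux_key_pt α h0 hα2 a x ha ⟨hx1, hx2⟩
      have hx0 : (0:ℝ) ≤ 1 + x := by linarith
      have h2 : (0:ℝ) ≤ 2 ^ β * (1 + x) ^ α := by positivity
      rw [← hba] at hk
      rw [hg]
      dsimp only
      linarith
    · have hk := aux_key_pt β (by linarith) hβ2 a (-x) ha ⟨by linarith, by linarith⟩
      have hab : α = -β := by linarith
      have h2 : (0:ℝ) ≤ 2 ^ α * (1 - x) ^ β := by
        have : (0:ℝ) ≤ 1 - x := by linarith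
        positivity
      rw [hg]
      simp only [add_neg_cancel_right, sub_neg_eq_add] at hk
      rw [show a + -x = a - x by ring, ← hab, mul_comm (|a - x| ^ β)] at hk
      dsimp only
      linarith
  have hIoc : volume.restrict (Ioc (-1 : ℝ) 1) = volume.restrict (Ioo (-1 : ℝ) 1) :=
    (Measure.restrict_congr_set Ioo_ae_eq_Ioc).symm
  have hgOn : IntegrableOn g (Ioc (-1 : ℝ) 1) volume :=
    (intervalIntegrable_iff_integrableOn_Ioc_of_le (by norm_num)).mp hgint
  have hfmeas : AEStronglyMeasurable (fun x : ℝ => |a + x| ^ α * |a - x| ^ β)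
      (volume.restrict (Ioo (-1 : ℝ) 1)) := by
    have hc : ContinuousOn (fun x : ℝ => |a + x| ^ α * |a - x| ^ β) (Ioo (-1 : ℝ) 1) := by
      apply ContinuousOn.mul
      · apply ContinuousOn.rpow_const ((continuous_const.add continuous_id).abs.continuousOn)
        intro x hx
        left
        have : (0:ℝ) < a + x := by have := hx.1; linarith
        simp [abs_of_pos this]
        linarith
      · apply ContinuousOn.rpow_const ((continuous_const.sub continuous_id).abs.continuousOn)
        intro x hx
        left
        have : (0:ℝ) < a - x := by have := hx.2; linarith
        simp [abs_of_pos this]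
        linarith
    exact hc.aestronglyMeasurable measurableSet_Ioo
  have hbound : ∀ᵐ x ∂(volume.restrict (Ioo (-1 : ℝ) 1)),
      ‖|a + x| ^ α * |a - x| ^ β‖ ≤ ‖g x‖ := by
    filter_upwards [ae_restrict_mem measurableSet_Ioo] with x hx
    have hf0 : (0:ℝ) ≤ |a + x| ^ α * |a - x| ^ β := by positivity
    have hg0 : (0:ℝ) ≤ g x := by
      have h1 : (0:ℝ) ≤ 1 - x := by have := hx.2; linarith
      have h2 : (0:ℝ) ≤ 1 + x := by have := hx.1; linarith
      rw [hg]; positivity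
    rw [Real.norm_eq_abs, Real.norm_eq_abs, abs_of_nonneg hf0, abs_of_nonneg hg0]
    exact hpt x hx
  have hfOn : IntegrableOn (fun x : ℝ => |a + x| ^ α * |a - x| ^ β) (Ioc (-1 : ℝ) 1) volume := by
    rw [IntegrableOn, hIoc]
    exact Integrable.mono (by rwa [IntegrableOn, hIoc] at hgOn) hfmeas hbound
  rw [intervalIntegral.integral_of_le (by norm_num : (-1:ℝ) ≤ 1),
    intervalIntegral.integral_of_le (by norm_num : (-1:ℝ) ≤ 1)]
  refine setIntegral_mono_ae_restrict hfOn hgOn ?_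
  rw [hIoc]
  filter_upwards [ae_restrict_mem measurableSet_Ioo] with x hx
  exact hpt x hx
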